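/- arXiv:1509.00191 — 3 statements merged into one kernel-verified Lean document; each statement's English description precedes it below -/
import Mathlib

section
/- Let A be an H-basic algebra with radical nilpotency index n_A, and let f be a multilinear H-nonidentity with property K (f vanishes on every evaluation on A with fewer than n_A − 1 radical substitutions). Then property K is strictly Phoenix: every multilinear H-polynomial f' in the H-T-ideal generated by f which is a nonidentity of A also has property K. -/
noncomputable section
open TensorProduct

/-! ## The free `H`-module algebra -/

variable (F : Type) [Field F] (H : Type) [Ring H] [Algebra F H]

/-- The free `H`-module algebra `F^H⟨X⟩` on a set of variables `V`:
the tensor algebra on `F X ⊗ H`. -/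
abbrev FreeHMA (V : Type) : Type := TensorAlgebra F ((V →₀ F) ⊗[F] H)

variable {V : Type}

/-- The variable `x_v^h`. -/
def xvar (v : V) (h : H) : FreeHMA F H V :=
  TensorAlgebra.ι F (Finsupp.single v 1 ⊗ₜ[F] h)

/-- The algebra endomorphism of the free `H`-module algebra induced by a linear
substitution of the variables (not touching the `H`-labels). -/
def substHom (g : V → (V →₀ F)) : FreeHMA F H V →ₐ[F] FreeHMA F H V :=
  TensorAlgebra.lift F ((TensorAlgebra.ι F).comp
    (LinearMap.rTensor H (Finsupp.linearCombination F g)))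

/-- `f|_{x_i ↔ x_j}` : swapping two variables. -/
def swapSubst [DecidableEq V] (i j : V) : FreeHMA F H V →ₐ[F] FreeHMA F H V :=
  substHom F H (fun v => Finsupp.single (Equiv.swap i j v) 1)

/-- `f|_{x_i → x_j}` : substituting `x_j` for `x_i`. -/
def renameSubst [DecidableEq V] (i j : V) : FreeHMA F H V →ₐ[F] FreeHMA F H V :=
  substHom F H (Function.update (fun v => Finsupp.single v 1) i (Finsupp.single j 1))

/-- `f` is alternating on the set of variables `X`. -/
def AlternatingOn [DecidableEq V] (X : Finset V) (f : FreeHMA F H V) : Prop :=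
  ∀ i ∈ X, ∀ j ∈ X, i ≠ j → swapSubst F H i j f = -f

/-- `f` involves only variables from `T`. -/
def DependsOnlyOn (f : FreeHMA F H V) (T : Set V) : Prop :=
  f ∈ Algebra.adjoin F {x : FreeHMA F H V | ∃ v ∈ T, ∃ h : H, x = xvar F H v h}

/-- `f` is a multilinear `H`-polynomial in the variables of `supp` (and involves no
other variables): substituting `α x_i + y` for `x_i` (`y` a fresh variable) gives
`α f + f|_{x_i → y}`. -/
def MultilinearOn [DecidableEq V] (supp S : Finset V) (f : FreeHMA F H V) : Prop :=
  DependsOnlyOn F H f ↑supp ∧ S ⊆ supp ∧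
  ∀ i ∈ S, ∀ y, y ∉ supp → ∀ α : F,
    substHom F H (Function.update (fun v => Finsupp.single v 1) i
        (α • Finsupp.single i 1 + Finsupp.single y 1)) f
      = α • f + renameSubst F H i y f

/-! ## `H`-module algebras -/

variable [Coalgebra F H]

/-- An `H`-module algebra structure on an `F`-algebra `A`: an `H`-action by linear maps
such that `h·(ab) = (h₍₁₎·a)(h₍₂₎·b)` and `h·1 = ε(h)1`. -/
structure HMA (A : Type) [Ring A] [Algebra F A] where
  act : H →ₗ[F] A →ₗ[F] A
  act_one : act 1 = LinearMap.id
  act_mul : ∀ h k : H, act (h * k) = (act h).comp (act k)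
  act_algebraOne : ∀ h : H, act h 1 = (Coalgebra.counit (R := F) h) • (1 : A)
  act_mul_compat :
    (TensorProduct.lift act).comp ((LinearMap.mul' F A).lTensor H)
      = (LinearMap.mul' F A).comp
          (((TensorProduct.map (TensorProduct.lift act) (TensorProduct.lift act)).comp
            (TensorProduct.tensorTensorTensorComm F H H A A).toLinearMap).comp
            ((Coalgebra.comul (R := F) (A := H)).rTensor (A ⊗[F] A)))

variable {A : Type} [Ring A] [Algebra F A]

/-- Evaluation of `H`-polynomials at an assignment `v : V → A` of the variables,
sending `x_v^h` to `h · (v v)`. -/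
def HMA.eval (M : HMA F H A) (v : V → A) : FreeHMA F H V →ₐ[F] A :=
  TensorAlgebra.lift F
    (TensorProduct.lift ((M.act.flip).comp (Finsupp.linearCombination F v)))

/-- The set of `H`-identities of `A` (in variables `V`). -/
def HMA.idSet (M : HMA F H A) (V : Type) : Set (FreeHMA F H V) :=
  {f | ∀ v : V → A, M.eval F H v f = 0}

/-- The `F`-subspace of `H`-identities of `A`. -/
def HMA.idSub (M : HMA F H A) (V : Type) : Submodule F (FreeHMA F H V) :=
  ⨅ v : V → A, LinearMap.ker (M.eval F H v).toLinearMap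

/-! ## `H`-T-ideals -/

/-- The canonical `H`-module algebra structure on the free `H`-module algebra is
characterized by `h · x_v^k = x_v^{hk}` on generators. -/
def IsFreeAction (𝔉 : HMA F H (FreeHMA F H V)) : Prop :=
  ∀ (h k : H) (p : V →₀ F),
    𝔉.act h (TensorAlgebra.ι F (p ⊗ₜ[F] k)) = TensorAlgebra.ι F (p ⊗ₜ[F] (h * k))

/-- An `H`-T-ideal: a two-sided ideal of the free `H`-module algebra stable under all
`H`-endomorphisms, i.e. under all substitutions of the variables by arbitrary
`H`-polynomials (`𝔉` is the free `H`-action). -/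
def IsHTIdeal (𝔉 : HMA F H (FreeHMA F H V)) (Γ : Set (FreeHMA F H V)) : Prop :=
  (0 : FreeHMA F H V) ∈ Γ ∧
  (∀ f g, f ∈ Γ → g ∈ Γ → f + g ∈ Γ) ∧
  (∀ f g, f ∈ Γ → g * f ∈ Γ ∧ f * g ∈ Γ) ∧
  (∀ (v : V → FreeHMA F H V) f, f ∈ Γ → 𝔉.eval F H v f ∈ Γ)

/-- The `H`-T-ideal generated by a set of `H`-polynomials. -/
def hTIdealSpan (𝔉 : HMA F H (FreeHMA F H V)) (s : Set (FreeHMA F H V)) :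
    Set (FreeHMA F H V) :=
  ⋂₀ {Γ | IsHTIdeal F H 𝔉 Γ ∧ s ⊆ Γ}

/-- `Γ` contains the `t`-th Capelli identity: every multilinear `H`-polynomial
alternating in `t` variables belongs to `Γ`. -/
def SatisfiesCapelli (Γ : Set (FreeHMA F H ℕ)) (t : ℕ) : Prop :=
  ∀ (f : FreeHMA F H ℕ) (supp X : Finset ℕ),
    MultilinearOn F H supp supp f → X ⊆ supp → X.card = t → AlternatingOn F H X f → f ∈ Γ

/-! ## The Kemer index -/

/-- There are, for every `μ`, multilinear `H`-polynomials outside `Γ` alternating on `μ`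
disjoint (small) sets of cardinality `a` and on `s` further disjoint (big) sets of
cardinality `a+1`. -/
def HasKemerAlt (Γ : Set (FreeHMA F H ℕ)) (a s : ℕ) : Prop :=
  ∀ μ : ℕ, ∃ (supp : Finset ℕ) (f : FreeHMA F H ℕ)
      (Xs : Fin μ → Finset ℕ) (Ys : Fin s → Finset ℕ),
    f ∉ Γ ∧ MultilinearOn F H supp supp f ∧
    (∀ i, Xs i ⊆ supp) ∧ (∀ j, Ys j ⊆ supp) ∧
    (∀ i, (Xs i).card = a) ∧ (∀ j, (Ys j).card = a + 1) ∧
    Pairwise (fun i i' => Disjoint (Xs i) (Xs i')) ∧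
    Pairwise (fun j j' => Disjoint (Ys j) (Ys j')) ∧
    (∀ i j, Disjoint (Xs i) (Ys j)) ∧
    (∀ i, AlternatingOn F H (Xs i) f) ∧ (∀ j, AlternatingOn F H (Ys j) f)

/-- `α(Γ)`, the first component of the Kemer index. -/
def kemerAlpha (Γ : Set (FreeHMA F H ℕ)) : ℕ :=
  sSup {a | HasKemerAlt F H Γ a 0}

/-- `s(Γ)`, the second component of the Kemer index. -/
def kemerS (Γ : Set (FreeHMA F H ℕ)) : ℕ :=
  sSup {s | HasKemerAlt F H Γ (kemerAlpha F H Γ) s}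

/-- The Kemer index `Ind(Γ) = (α(Γ), s(Γ))`. -/
def kemerIndex (Γ : Set (FreeHMA F H ℕ)) : ℕ × ℕ :=
  (kemerAlpha F H Γ, kemerS F H Γ)

/-- An `H`-Kemer polynomial of `Γ` of rank `μ`. -/
def IsKemerPoly (Γ : Set (FreeHMA F H ℕ)) (μ : ℕ) (f : FreeHMA F H ℕ) : Prop :=
  ∃ (supp : Finset ℕ) (Xs : Fin μ → Finset ℕ)
      (Ys : Fin (kemerS F H Γ) → Finset ℕ),
    f ∉ Γ ∧ MultilinearOn F H supp supp f ∧
    (∀ i, Xs i ⊆ supp) ∧ (∀ j, Ys j ⊆ supp) ∧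
    (∀ i, (Xs i).card = kemerAlpha F H Γ) ∧
    (∀ j, (Ys j).card = kemerAlpha F H Γ + 1) ∧
    Pairwise (fun i i' => Disjoint (Xs i) (Xs i')) ∧
    Pairwise (fun j j' => Disjoint (Ys j) (Ys j')) ∧
    (∀ i j, Disjoint (Xs i) (Ys j)) ∧
    (∀ i, AlternatingOn F H (Xs i) f) ∧ (∀ j, AlternatingOn F H (Ys j) f)

/-! ## Finite dimensional `H`-module algebras, radicals and parameters -/

/-- A bundled finite dimensional `H`-module algebra. -/
structure FDHMA where
  carrier : Type
  [ring : Ring carrier]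
  [alg : Algebra F carrier]
  fd : FiniteDimensional F carrier
  M : HMA F H carrier

attribute [instance] FDHMA.ring FDHMA.alg

/-- The Jacobson radical of an `F`-algebra, as an `F`-subspace. -/
def jacRad (A : Type) [Ring A] [Algebra F A] : Submodule F A :=
  ((⊥ : Ideal A).jacobson).restrictScalars F

/-- The nilpotency index `n_A` of the Jacobson radical. -/
def nilIndex (A : Type) [Ring A] : ℕ :=
  sInf {n : ℕ | ((⊥ : Ideal A).jacobson) ^ n = ⊥}

/-- `d(A)`, the dimension of the semisimple part `A/J(A)`. -/
def ssDim (A : Type) [Ring A] [Algebra F A] : ℕ :=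
  Module.finrank F (A ⧸ jacRad F A)

/-- The parameter `Par(A) = (d(A), n_A - 1)` of a finite dimensional algebra. -/
def par (A : FDHMA F H) : ℕ × ℕ :=
  (ssDim F A.carrier, nilIndex A.carrier - 1)

/-- The `H`-identities (in countably many variables) of a bundled algebra. -/
def FDHMA.ids (A : FDHMA F H) : Set (FreeHMA F H ℕ) :=
  A.M.idSet F H ℕ

/-- An `H`-basic algebra: not `H`-PI-equivalent to a finite direct product of finite
dimensional `H`-module algebras of strictly smaller parameter. -/
def IsHBasic (A : FDHMA F H) : Prop :=
  ¬ ∃ (s : ℕ) (B : Fin s → FDHMA F H),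
      (∀ i, toLex (par F H (B i)) < toLex (par F H A)) ∧
      A.ids F H = ⋂ i, (B i).ids F H

/-- The `H`-ideal of an `H`-module algebra generated by a set. -/
def hIdealSpan (M : HMA F H A) (s : Set A) : Submodule F A :=
  sInf {I : Submodule F A | s ⊆ I ∧ (∀ a : A, ∀ x ∈ I, a * x ∈ I ∧ x * a ∈ I) ∧
    (∀ h : H, ∀ x ∈ I, M.act h x ∈ I)}

/-! ### Auxiliary machinery for Statement 10 -/

set_option linter.unusedSectionVars false

namespace SP

open TensorProduct

variable {F : Type} [Field F] {H : Type} [Ring H] [Algebra F H] [Coalgebra F H]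
variable {V : Type} {B : Type} [Ring B] [Algebra F B]

/-- Evaluation on a generator. -/
theorem eval_iota (M : HMA F H B) (u : V → B) (p : V →₀ F) (h : H) :
    M.eval F H u (TensorAlgebra.ι F (p ⊗ₜ[F] h)) = M.act h (Finsupp.linearCombination F u p) := by
  unfold HMA.eval
  rw [TensorAlgebra.lift_ι_apply, TensorProduct.lift.tmul]
  rfl

/-- The Sweedler multiplication auxiliary map. -/
noncomputable def sweedlerAux (act : H →ₗ[F] B →ₗ[F] B) (a b : B) : H ⊗[F] H →ₗ[F] B :=
  (LinearMap.mul' F B) ∘ₗ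
    (TensorProduct.map (TensorProduct.lift act) (TensorProduct.lift act)) ∘ₗ
    (TensorProduct.tensorTensorTensorComm F H H B B).toLinearMap ∘ₗ
    ((TensorProduct.mk F (H ⊗[F] H) (B ⊗[F] B)).flip (a ⊗ₜ[F] b))

theorem sweedlerAux_tmul (act : H →ₗ[F] B →ₗ[F] B) (a b : B) (g g' : H) :
    sweedlerAux act a b (g ⊗ₜ[F] g') = act g a * act g' b := by
  simp [sweedlerAux, TensorProduct.mk_apply, TensorProduct.tensorTensorTensorComm_tmul,
    TensorProduct.map_tmul, TensorProduct.lift.tmul, LinearMap.mul'_apply]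

theorem act_mul_sweedler (M : HMA F H B) (h : H) (a b : B) :
    M.act h (a * b) = sweedlerAux M.act a b (Coalgebra.comul (R := F) h) := by
  have := LinearMap.congr_fun M.act_mul_compat (h ⊗ₜ[F] (a ⊗ₜ[F] b))
  simpa [LinearMap.mul'_apply, TensorProduct.lift.tmul, sweedlerAux,
    TensorProduct.mk_apply] using this

/-- A pointwise Sweedler identity suffices to establish `act_mul_compat`. -/
theorem compat_of_sweedler (act : H →ₗ[F] B →ₗ[F] B)
    (hpt : ∀ (h : H) (a b : B), act h (a * b) = sweedlerAux act a b (Coalgebra.comul (R := F) h)) :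
    (TensorProduct.lift act).comp ((LinearMap.mul' F B).lTensor H)
      = (LinearMap.mul' F B).comp
          (((TensorProduct.map (TensorProduct.lift act) (TensorProduct.lift act)).comp
            (TensorProduct.tensorTensorTensorComm F H H B B).toLinearMap).comp
            ((Coalgebra.comul (R := F) (A := H)).rTensor (B ⊗[F] B))) := by
  apply TensorProduct.ext'
  intro h y
  induction y using TensorProduct.induction_on with
  | zero => simp only [TensorProduct.tmul_zero, map_zero]
  | tmul a b =>
    have := hpt h a b
    simpa [LinearMap.mul'_apply, TensorProduct.lift.tmul, sweedlerAux,
      TensorProduct.mk_apply] using this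
  | add y₁ y₂ ih₁ ih₂ =>
    simp only [TensorProduct.tmul_add, map_add] at ih₁ ih₂ ⊢
    rw [ih₁, ih₂]

end SP

namespace SP

variable {F : Type} [Field F] {H : Type} [Ring H] [Algebra F H] [Coalgebra F H]
variable {V : Type} {B : Type} [Ring B] [Algebra F B]

open TensorProduct

theorem eval_xvar (M : HMA F H B) (u : V → B) (k : V) (h : H) :
    M.eval F H u (xvar F H k h) = M.act h (u k) := by
  rw [xvar, eval_iota, Finsupp.linearCombination_single, one_smul]

/-- Equivariance of evaluation with respect to the free action. -/
theorem eval_act (𝔉 : HMA F H (FreeHMA F H V)) (hfree : IsFreeAction F H 𝔉)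
    (M : HMA F H B) (u : V → B) (z : FreeHMA F H V) :
    ∀ h : H, M.eval F H u (𝔉.act h z) = M.act h (M.eval F H u z) := by
  refine TensorAlgebra.induction ?_ ?_ ?_ ?_ z
  · intro r h
    have h1 : 𝔉.act h ((algebraMap F (FreeHMA F H V)) r)
        = r • ((Coalgebra.counit (R := F) h) • (1 : FreeHMA F H V)) := by
      rw [Algebra.algebraMap_eq_smul_one, map_smul, 𝔉.act_algebraOne]
    have h2 : M.act h (M.eval F H u ((algebraMap F (FreeHMA F H V)) r))
        = r • ((Coalgebra.counit (R := F) h) • (1 : B)) := by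
      rw [AlgHom.commutes, Algebra.algebraMap_eq_smul_one, map_smul, M.act_algebraOne]
    rw [h1, h2, map_smul, map_smul, map_one]
  · intro x
    induction x using TensorProduct.induction_on with
    | zero => intro h; simp only [map_zero]
    | tmul p k =>
      intro h
      rw [hfree h k p, eval_iota, eval_iota]
      have := LinearMap.congr_fun (M.act_mul h k) (Finsupp.linearCombination F u p)
      simpa using this
    | add x y ihx ihy =>
      intro h
      simp only [map_add]
      rw [ihx h, ihy h]
  · intro a b iha ihb h
    have key : ∀ x : H ⊗[F] H,
        M.eval F H u (sweedlerAux 𝔉.act a b x)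
          = sweedlerAux M.act (M.eval F H u a) (M.eval F H u b) x := by
      intro x
      induction x using TensorProduct.induction_on with
      | zero => simp only [map_zero]
      | tmul g g' => rw [sweedlerAux_tmul, sweedlerAux_tmul, map_mul, iha g, ihb g']
      | add x y ihx ihy => simp only [map_add]; rw [ihx, ihy]
    rw [act_mul_sweedler 𝔉 h a b, key, map_mul]
    exact (act_mul_sweedler M h _ _).symm
  · intro a b iha ihb h
    simp only [map_add]
    rw [iha h, ihb h]

/-- Composition of evaluations. -/
theorem eval_eval (𝔉 : HMA F H (FreeHMA F H V)) (hfree : IsFreeAction F H 𝔉)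
    (M : HMA F H B) (u : V → B) (w : V → FreeHMA F H V) (g : FreeHMA F H V) :
    M.eval F H u (𝔉.eval F H w g) = M.eval F H (fun k => M.eval F H u (w k)) g := by
  have : (M.eval F H u).comp (𝔉.eval F H w) = M.eval F H (fun k => M.eval F H u (w k)) := by
    apply TensorAlgebra.hom_ext
    apply TensorProduct.ext'
    intro p h
    simp only [LinearMap.comp_apply, AlgHom.toLinearMap_apply, AlgHom.comp_apply]
    rw [eval_iota, eval_iota, eval_act 𝔉 hfree M u _ h]
    congr 1
    exact Finsupp.apply_linearCombination F (M.eval F H u).toLinearMap w p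
  exact DFunLike.congr_fun this g

theorem eval_substHom (M : HMA F H B) (u : V → B) (g : V → (V →₀ F)) (q : FreeHMA F H V) :
    M.eval F H u (substHom F H g q)
      = M.eval F H (fun k => Finsupp.linearCombination F u (g k)) q := by
  have : (M.eval F H u).comp (substHom F H g) =
      M.eval F H (fun k => Finsupp.linearCombination F u (g k)) := by
    apply TensorAlgebra.hom_ext
    apply TensorProduct.ext'
    intro p h
    simp only [LinearMap.comp_apply, AlgHom.toLinearMap_apply, AlgHom.comp_apply]
    rw [substHom, TensorAlgebra.lift_ι_apply]
    simp only [LinearMap.comp_apply, LinearMap.rTensor_tmul]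
    rw [eval_iota, eval_iota]
    congr 1
    exact Finsupp.apply_linearCombination F (Finsupp.linearCombination F u) g p
  exact DFunLike.congr_fun this q

/-- Evaluations agree on polynomials depending only on variables where they agree. -/
theorem eval_congr (M : HMA F H B) {q : FreeHMA F H V} {T : Set V}
    (hdep : DependsOnlyOn F H q T) {u u' : V → B} (huu : ∀ k ∈ T, u k = u' k) :
    M.eval F H u q = M.eval F H u' q := by
  have : Set.EqOn (M.eval F H u) (M.eval F H u')
      ↑(Algebra.adjoin F {x : FreeHMA F H V | ∃ v ∈ T, ∃ h : H, x = xvar F H v h}) := by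
    rw [AlgHom.eqOn_adjoin_iff]
    rintro x ⟨k, hk, h, rfl⟩
    rw [eval_xvar, eval_xvar, huu k hk]
  exact this hdep

/-- The range of evaluation lies in any suitable submodule. -/
theorem eval_mem (M : HMA F H B) (W : Submodule F B) (h1 : (1 : B) ∈ W)
    (hmul : ∀ x ∈ W, ∀ y ∈ W, x * y ∈ W) (hact : ∀ (h : H), ∀ x ∈ W, M.act h x ∈ W)
    (u : V → B) (hu : ∀ k, u k ∈ W) (z : FreeHMA F H V) : M.eval F H u z ∈ W := by
  refine TensorAlgebra.induction ?_ ?_ ?_ ?_ z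
  · intro r
    rw [AlgHom.commutes, Algebra.algebraMap_eq_smul_one]
    exact W.smul_mem r h1
  · intro x
    induction x using TensorProduct.induction_on with
    | zero => simp only [map_zero]; exact W.zero_mem
    | tmul p h =>
      rw [eval_iota]
      refine hact h _ ?_
      rw [Finsupp.linearCombination_apply, Finsupp.sum]
      exact Submodule.sum_mem W fun k _ => W.smul_mem _ (hu k)
    | add x y ihx ihy => rw [map_add, map_add]; exact W.add_mem ihx ihy
  · intro a b iha ihb
    rw [map_mul]; exact hmul _ iha _ ihb
  · intro a b iha ihb
    rw [map_add]; exact W.add_mem iha ihb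

end SP

namespace SP

variable {F : Type} [Field F] {H : Type} [Ring H] [Algebra F H] [Coalgebra F H]
variable {V : Type} [DecidableEq V] [Infinite V] {B : Type} [Ring B] [Algebra F B]

open TensorProduct

section ML

variable {suppq : Finset V} {q : FreeHMA F H V} (M : HMA F H B)
variable (hml : MultilinearOn F H suppq suppq q)

include hml

theorem ml_update {i : V} (hi : i ∈ suppq) {y : V} (hy : y ∉ suppq) (α : F) (u : V → B) :
    M.eval F H (Function.update u i (α • u i + u y)) q
      = α • M.eval F H u q + M.eval F H (Function.update u i (u y)) q := by
  have h2 := congrArg (M.eval F H u) (hml.2.2 i hi y hy α)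
  rw [eval_substHom, map_add, map_smul] at h2
  rw [renameSubst, eval_substHom] at h2
  have e1 : (fun k => Finsupp.linearCombination F u
      ((Function.update (fun v => Finsupp.single v 1) i
        (α • Finsupp.single i 1 + Finsupp.single y 1)) k)) = Function.update u i (α • u i + u y) := by
    funext k
    by_cases hk : k = i
    · subst hk
      rw [Function.update_self, Function.update_self, map_add, map_smul,
        Finsupp.linearCombination_single, Finsupp.linearCombination_single, one_smul, one_smul]
    · rw [Function.update_of_ne hk, Function.update_of_ne hk,
        Finsupp.linearCombination_single, one_smul]
  have e2 : (fun k => Finsupp.linearCombination F u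
      ((Function.update (fun v => Finsupp.single v 1) i (Finsupp.single y 1)) k))
        = Function.update u i (u y) := by
    funext k
    by_cases hk : k = i
    · subst hk
      rw [Function.update_self, Function.update_self, Finsupp.linearCombination_single, one_smul]
    · rw [Function.update_of_ne hk, Function.update_of_ne hk,
        Finsupp.linearCombination_single, one_smul]
  rw [e1, e2] at h2
  exact h2

theorem ml_add {i : V} (hi : i ∈ suppq) (u : V → B) (a b : B) :
    M.eval F H (Function.update u i (a + b)) q
      = M.eval F H (Function.update u i a) q + M.eval F H (Function.update u i b) q := by
  obtain ⟨y, hy⟩ := Finset.exists_notMem suppq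
  have hiy : i ≠ y := fun h => hy (h ▸ hi)
  set u1 := Function.update (Function.update u i a) y b with hu1
  have h2 := ml_update M hml hi hy 1 u1
  have hu1i : u1 i = a := by rw [hu1, Function.update_of_ne hiy, Function.update_self]
  have hu1y : u1 y = b := by rw [hu1, Function.update_self]
  rw [hu1i, hu1y, one_smul] at h2
  have drop : ∀ x : B, M.eval F H (Function.update u1 i x) q
      = M.eval F H (Function.update u i x) q := by
    intro x
    rw [hu1, Function.update_comm hiy.symm, Function.update_idem]
    refine eval_congr M hml.1 ?_
    intro k hk
    have : k ≠ y := fun h => hy (h ▸ hk)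
    rw [Function.update_of_ne this]
  have dropu : M.eval F H u1 q = M.eval F H (Function.update u i a) q := by
    refine eval_congr M hml.1 ?_
    intro k hk
    have : k ≠ y := fun h => hy (h ▸ hk)
    rw [hu1, Function.update_of_ne this]
  rw [drop, drop, dropu, one_smul] at h2
  exact h2

theorem ml_zero {i : V} (hi : i ∈ suppq) (u : V → B) :
    M.eval F H (Function.update u i 0) q = 0 := by
  have := ml_add M hml hi u 0 0
  rw [add_zero] at this
  exact (add_eq_left.mp this.symm)

theorem ml_smul {i : V} (hi : i ∈ suppq) (u : V → B) (α : F) (a : B) :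
    M.eval F H (Function.update u i (α • a)) q = α • M.eval F H (Function.update u i a) q := by
  obtain ⟨y, hy⟩ := Finset.exists_notMem suppq
  have hiy : i ≠ y := fun h => hy (h ▸ hi)
  set u1 := Function.update (Function.update u i a) y 0 with hu1
  have h2 := ml_update M hml hi hy α u1
  have hu1i : u1 i = a := by rw [hu1, Function.update_of_ne hiy, Function.update_self]
  have hu1y : u1 y = (0 : B) := by rw [hu1, Function.update_self]
  rw [hu1i, hu1y, add_zero] at h2
  have drop : ∀ x : B, M.eval F H (Function.update u1 i x) q
      = M.eval F H (Function.update u i x) q := by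
    intro x
    rw [hu1, Function.update_comm hiy.symm, Function.update_idem]
    refine eval_congr M hml.1 ?_
    intro k hk
    have : k ≠ y := fun h => hy (h ▸ hk)
    rw [Function.update_of_ne this]
  have dropu : M.eval F H u1 q = M.eval F H (Function.update u i a) q := by
    refine eval_congr M hml.1 ?_
    intro k hk
    have : k ≠ y := fun h => hy (h ▸ hk)
    rw [hu1, Function.update_of_ne this]
  rw [drop, drop, dropu, ml_zero M hml hi, add_zero] at h2
  exact h2

theorem ml_scale (T : Finset V) (hT : T ⊆ suppq) (γ : V → F) (b : V → B) :
    M.eval F H (fun k => if k ∈ T then γ k • b k else b k) q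
      = (∏ k ∈ T, γ k) • M.eval F H b q := by
  induction T using Finset.induction_on with
  | empty =>
    have : (fun k => if k ∈ (∅ : Finset V) then γ k • b k else b k) = b :=
      funext fun k => if_neg (Finset.notMem_empty k)
    rw [this, Finset.prod_empty, one_smul]
  | insert _ _ hj =>
    rename_i j T ih
    have hjs : j ∈ suppq := hT (Finset.mem_insert_self j T)
    have hTs : T ⊆ suppq := fun x hx => hT (Finset.mem_insert_of_mem hx)
    have e1 : (fun k => if k ∈ insert j T then γ k • b k else b k)
        = Function.update (fun k => if k ∈ T then γ k • b k else b k) j (γ j • b j) := by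
      funext k
      by_cases hk : k = j
      · subst hk; rw [Function.update_self, if_pos (Finset.mem_insert_self k T)]
      · rw [Function.update_of_ne hk]
        simp only [Finset.mem_insert, hk, false_or]
    have e2 : Function.update (fun k => if k ∈ T then γ k • b k else b k) j (b j)
        = (fun k => if k ∈ T then γ k • b k else b k) := by
      have : (fun k => if k ∈ T then γ k • b k else b k) j = b j := if_neg hj
      conv_lhs => rw [← this]
      exact Function.update_eq_self j _
    rw [e1, ml_smul M hml hjs _ (γ j) (b j), e2, ih hTs, Finset.prod_insert hj, smul_smul]

end ML

end SP

namespace SP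

variable {F : Type} [Field F] {H : Type} [Ring H] [Algebra F H] [Coalgebra F H]
variable {B : Type} [Ring B] [Algebra F B]

open TensorProduct

/-- The pointwise action on functions. -/
noncomputable def funAct (σ : Type) (M : HMA F H B) : H →ₗ[F] (σ → B) →ₗ[F] (σ → B) where
  toFun := fun h => LinearMap.compLeft (M.act h) σ
  map_add' := by intro h k; ext φ c; simp [LinearMap.compLeft]; rfl
  map_smul' := by intro r h; ext φ c; simp [LinearMap.compLeft]; rfl

theorem funAct_apply (σ : Type) (M : HMA F H B) (h : H) (φ : σ → B) (c : σ) :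
    funAct σ M h φ c = M.act h (φ c) := rfl

/-- The pointwise `H`-module algebra structure on functions into an `H`-module algebra. -/
noncomputable def funHMA (σ : Type) (M : HMA F H B) : HMA F H (σ → B) where
  act := funAct σ M
  act_one := by
    ext φ c
    simpa [funAct_apply] using LinearMap.congr_fun M.act_one (φ c)
  act_mul := by
    intro h k
    ext φ c
    simpa [funAct_apply] using LinearMap.congr_fun (M.act_mul h k) (φ c)
  act_algebraOne := by
    intro h
    funext c
    simpa [funAct_apply] using M.act_algebraOne h
  act_mul_compat := by
    apply compat_of_sweedler
    intro h φ ψ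
    funext c
    have key : ∀ x : H ⊗[F] H,
        (sweedlerAux (funAct σ M) φ ψ x) c = sweedlerAux M.act (φ c) (ψ c) x := by
      intro x
      induction x using TensorProduct.induction_on with
      | zero => simp only [map_zero, Pi.zero_apply]
      | tmul g g' => rw [sweedlerAux_tmul, sweedlerAux_tmul]; rfl
      | add x y ihx ihy => simp only [map_add, Pi.add_apply]; rw [ihx, ihy]
    rw [key]
    have hmul : (φ * ψ) c = φ c * ψ c := rfl
    rw [funAct_apply, hmul]
    exact act_mul_sweedler M h (φ c) (ψ c)

theorem funHMA_act_apply (σ : Type) (M : HMA F H B) (h : H) (φ : σ → B) (c : σ) :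
    (funHMA σ M).act h φ c = M.act h (φ c) := rfl

/-- Pointwise evaluation of a function-algebra evaluation. -/
theorem funHMA_eval_apply {V σ : Type} (M : HMA F H B) (u : V → (σ → B))
    (g : FreeHMA F H V) (c : σ) :
    (funHMA σ M).eval F H u g c = M.eval F H (fun k => u k c) g := by
  have key : (Pi.evalAlgHom F (fun _ : σ => B) c).comp ((funHMA σ M).eval F H u)
      = M.eval F H (fun k => u k c) := by
    apply TensorAlgebra.hom_ext
    apply TensorProduct.ext'
    intro p h
    simp only [LinearMap.comp_apply, AlgHom.toLinearMap_apply, AlgHom.comp_apply]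
    rw [eval_iota, eval_iota]
    have hlc : Finsupp.linearCombination F u p c
        = Finsupp.linearCombination F (fun k => u k c) p := by
      exact Finsupp.apply_linearCombination F
        ((LinearMap.proj c : (σ → B) →ₗ[F] B)) u p
    show (funHMA σ M).act h (Finsupp.linearCombination F u p) c = _
    rw [funHMA_act_apply, hlc]
  exact DFunLike.congr_fun key g

end SP

namespace SP

variable {F : Type} [Field F]

open TensorProduct

/-- The scalar monomial function `c ↦ ∏ c k ^ d k`. -/
def cpow (c : ℕ → F) (d : ℕ →₀ ℕ) : F := d.prod fun k e => c k ^ e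

theorem cpow_zero (c : ℕ → F) : cpow c 0 = 1 := Finsupp.prod_zero_index

theorem cpow_add (c : ℕ → F) (d e : ℕ →₀ ℕ) : cpow c (d + e) = cpow c d * cpow c e :=
  Finsupp.prod_add_index' (fun a => pow_zero (c a)) (fun a b₁ b₂ => pow_add (c a) b₁ b₂)

theorem cpow_single (c : ℕ → F) (k : ℕ) : cpow c (Finsupp.single k 1) = c k := by
  unfold cpow
  rw [Finsupp.prod_single_index (h := fun k e => c k ^ e) (pow_zero (c k)), pow_one]

theorem cpow_finset_sum (c : ℕ → F) (T : Finset ℕ) (dd : ℕ → (ℕ →₀ ℕ)) :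
    cpow c (∑ k ∈ T, dd k) = ∏ k ∈ T, cpow c (dd k) := by
  classical
  induction T using Finset.induction_on with
  | empty => simp [cpow_zero]
  | insert _ _ hj =>
    rename_i j T ih
    rw [Finset.sum_insert hj, Finset.prod_insert hj, cpow_add, ih]

section Monfn

variable {A' : Type} [Ring A'] [Algebra F A']

/-- The monomial function `c ↦ (∏ c k ^ d k) • a`. -/
def monfn (d : ℕ →₀ ℕ) (a : A') : (ℕ → F) → A' := fun c => cpow c d • a

theorem monfn_mul (d e : ℕ →₀ ℕ) (a b : A') :
    monfn d a * monfn e b = monfn (F := F) (d + e) (a * b) := by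
  funext c
  show cpow c d • a * cpow c e • b = cpow c (d + e) • (a * b)
  rw [cpow_add, smul_mul_smul_comm]

theorem monfn_zero (d : ℕ →₀ ℕ) : monfn (F := F) d (0 : A') = 0 := by
  funext c; show cpow c d • (0 : A') = 0; rw [smul_zero]

theorem monfn_one : monfn (F := F) (0 : ℕ →₀ ℕ) (1 : A') = 1 := by
  funext c; show cpow c 0 • (1 : A') = 1; rw [cpow_zero, one_smul]

theorem monfn_smul (d : ℕ →₀ ℕ) (r : F) (a : A') :
    monfn d (r • a) = r • monfn (F := F) d a := by
  funext c; show cpow c d • r • a = r • cpow c d • a; rw [smul_comm]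

variable {H : Type} [Ring H] [Algebra F H] [Coalgebra F H]

theorem funHMA_act_monfn (M : HMA F H A') (h : H) (d : ℕ →₀ ℕ) (a : A') :
    (funHMA (ℕ → F) M).act h (monfn (F := F) d a) = monfn d (M.act h a) := by
  funext c
  rw [funHMA_act_apply]
  show M.act h (cpow c d • a) = cpow c d • M.act h a
  rw [map_smul]

/-- Monomial functions with `Sbar`-constrained constant coefficients. -/
def GW (Sbar : Subalgebra F A') : Set ((ℕ → F) → A') :=
  {x | ∃ d a, (d = 0 → a ∈ Sbar) ∧ x = monfn (F := F) d a}

/-- All monomial functions. -/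
def GAll : Set ((ℕ → F) → A') := {x | ∃ d a, x = monfn (F := F) d a}

/-- Monomial functions of bad degree. -/
def GI (χ : ℕ →₀ ℕ) : Set ((ℕ → F) → A') := {x | ∃ d a, ¬ d ≤ χ ∧ x = monfn (F := F) d a}

theorem span_mul_span_of_sets {s t r : Set ((ℕ → F) → A')} (hst : ∀ x ∈ s, ∀ y ∈ t, x * y ∈ r)
    {x y : (ℕ → F) → A'} (hx : x ∈ Submodule.span F s) (hy : y ∈ Submodule.span F t) :
    x * y ∈ Submodule.span F r := by
  induction hx using Submodule.span_induction with
  | mem a ha =>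
    induction hy using Submodule.span_induction with
    | mem b hb => exact Submodule.subset_span (hst _ ha _ hb)
    | zero => rw [mul_zero]; exact Submodule.zero_mem _
    | add b₁ b₂ hb₁ hb₂ ih₁ ih₂ => rw [mul_add]; exact Submodule.add_mem _ ih₁ ih₂
    | smul r b hb ih => rw [mul_smul_comm]; exact Submodule.smul_mem _ r ih
  | zero => rw [zero_mul]; exact Submodule.zero_mem _
  | add a₁ a₂ ha₁ ha₂ ih₁ ih₂ => rw [add_mul]; exact Submodule.add_mem _ ih₁ ih₂
  | smul r a ha ih => rw [smul_mul_assoc]; exact Submodule.smul_mem _ r ih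

theorem GW_mul (Sbar : Subalgebra F A') :
    ∀ x ∈ GW (F := F) Sbar, ∀ y ∈ GW (F := F) Sbar, x * y ∈ GW (F := F) Sbar := by
  rintro x ⟨d, a, hda, rfl⟩ y ⟨e, b, heb, rfl⟩
  refine ⟨d + e, a * b, ?_, (monfn_mul d e a b)⟩
  intro hde
  rcases add_eq_zero.mp hde with ⟨hd, he⟩
  exact Sbar.mul_mem (hda hd) (heb he)

theorem GAll_mul : ∀ x ∈ GAll (F := F) (A' := A'), ∀ y ∈ GAll (F := F) (A' := A'),
    x * y ∈ GAll (F := F) (A' := A') := by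
  rintro x ⟨d, a, rfl⟩ y ⟨e, b, rfl⟩
  exact ⟨d + e, a * b, (monfn_mul d e a b)⟩

theorem GI_mul_GAll (χ : ℕ →₀ ℕ) : ∀ x ∈ GI (F := F) (A' := A') χ,
    ∀ y ∈ GAll (F := F) (A' := A'), x * y ∈ GI (F := F) (A' := A') χ := by
  rintro x ⟨d, a, hd, rfl⟩ y ⟨e, b, rfl⟩
  refine ⟨d + e, a * b, ?_, (monfn_mul d e a b)⟩
  intro hde
  exact hd (le_trans le_self_add hde)

theorem GAll_mul_GI (χ : ℕ →₀ ℕ) : ∀ x ∈ GAll (F := F) (A' := A'),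
    ∀ y ∈ GI (F := F) (A' := A') χ, x * y ∈ GI (F := F) (A' := A') χ := by
  rintro x ⟨d, a, rfl⟩ y ⟨e, b, he, rfl⟩
  refine ⟨d + e, a * b, ?_, (monfn_mul d e a b)⟩
  intro hde
  exact he (le_trans le_add_self hde)

theorem GW_act (Sbar : Subalgebra F A') (M : HMA F H A')
    (hstable : ∀ (h : H), ∀ x ∈ Sbar, M.act h x ∈ Sbar) (h : H) :
    ∀ x ∈ Submodule.span F (GW (F := F) Sbar),
      (funHMA (ℕ → F) M).act h x ∈ Submodule.span F (GW (F := F) Sbar) := by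
  intro x hx
  induction hx using Submodule.span_induction with
  | mem a ha =>
    obtain ⟨d, a', hda, rfl⟩ := ha
    rw [funHMA_act_monfn]
    exact Submodule.subset_span ⟨d, M.act h a', fun hd => hstable h a' (hda hd), rfl⟩
  | zero => rw [map_zero]; exact Submodule.zero_mem _
  | add a b ha hb iha ihb => rw [map_add]; exact Submodule.add_mem _ iha ihb
  | smul r a ha ih => rw [map_smul]; exact Submodule.smul_mem _ r ih

theorem GAll_act (M : HMA F H A') (h : H) :
    ∀ x ∈ Submodule.span F (GAll (F := F) (A' := A')),
      (funHMA (ℕ → F) M).act h x ∈ Submodule.span F (GAll (F := F) (A' := A')) := by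
  intro x hx
  induction hx using Submodule.span_induction with
  | mem a ha =>
    obtain ⟨d, a', rfl⟩ := ha
    rw [funHMA_act_monfn]
    exact Submodule.subset_span ⟨d, M.act h a', rfl⟩
  | zero => rw [map_zero]; exact Submodule.zero_mem _
  | add a b ha hb iha ihb => rw [map_add]; exact Submodule.add_mem _ iha ihb
  | smul r a ha ih => rw [map_smul]; exact Submodule.smul_mem _ r ih

end Monfn

end SP

namespace SP

variable {F : Type} [Field F]

open TensorProduct

/-- The indicator finsupp of a finset. -/
def indic (R : Finset ℕ) : ℕ →₀ ℕ := ∑ k ∈ R, Finsupp.single k 1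

theorem indic_apply (R : Finset ℕ) (m : ℕ) : indic R m = if m ∈ R then 1 else 0 := by
  classical
  rw [indic, Finsupp.finset_sum_apply]
  have e : ∀ k ∈ R, Finsupp.single k (1 : ℕ) m = if k = m then 1 else 0 :=
    fun k _ => Finsupp.single_apply
  rw [Finset.sum_congr rfl e, Finset.sum_ite_eq' R m (fun _ => (1 : ℕ))]

theorem indic_support (R : Finset ℕ) : (indic R).support = R := by
  ext m
  rw [Finsupp.mem_support_iff, indic_apply]
  by_cases hm : m ∈ R <;> simp [hm]

/-- Total degree of a finsupp exponent vector. -/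
def deg (d : ℕ →₀ ℕ) : ℕ := d.sum fun _ e => e

theorem deg_indic (R : Finset ℕ) : deg (indic R) = R.card := by
  rw [deg, Finsupp.sum, indic_support]
  rw [Finset.sum_congr rfl (fun k hk => by rw [indic_apply, if_pos hk])]
  exact Finset.card_eq_sum_ones R ▸ rfl

section A'

variable {A' : Type} [Ring A'] [Algebra F A']

theorem monfn_pt (d : ℕ →₀ ℕ) (a : A') (S : Finset ℕ) (ε : F) :
    monfn (F := F) d a (fun k => if k ∈ S then ε else 0)
      = (if d.support ⊆ S then ε ^ deg d else 0) • a := by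
  classical
  show cpow (fun k => if k ∈ S then ε else 0) d • a = _
  congr 1
  unfold cpow
  rw [Finsupp.prod]
  by_cases hsub : d.support ⊆ S
  · rw [if_pos hsub]
    have e : ∀ k ∈ d.support, (fun k => if k ∈ S then ε else 0) k ^ d k = ε ^ d k := by
      intro k hk
      show (if k ∈ S then ε else 0) ^ d k = ε ^ d k
      rw [if_pos (hsub hk)]
    rw [Finset.prod_congr rfl e, Finset.prod_pow_eq_pow_sum]
    rfl
  · rw [if_neg hsub]
    obtain ⟨k, hk, hkS⟩ := Finset.not_subset.mp hsub
    refine Finset.prod_eq_zero hk ?_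
    show (if k ∈ S then ε else 0) ^ d k = 0
    rw [if_neg hkS]
    exact zero_pow (Finsupp.mem_support_iff.mp hk)

/-- The inclusion–exclusion extraction functional. -/
noncomputable def Lam (R : Finset ℕ) (ε : F) : ((ℕ → F) → A') →ₗ[F] A' :=
  ∑ S ∈ R.powerset, ((-1 : F) ^ (R.card - S.card)) •
    (LinearMap.proj (R := F) (φ := fun _ : ℕ → F => A') (fun k => if k ∈ S then ε else 0))

theorem Lam_apply (R : Finset ℕ) (ε : F) (x : (ℕ → F) → A') :
    Lam R ε x = ∑ S ∈ R.powerset,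
      ((-1 : F) ^ (R.card - S.card)) • x (fun k => if k ∈ S then ε else 0) := by
  rw [Lam, LinearMap.sum_apply]
  exact Finset.sum_congr rfl fun S _ => rfl

theorem powsum (P : Finset ℕ) :
    (∑ T ∈ P.powerset, ((-1 : F) ^ (P.card - T.card))) = if P = ∅ then 1 else 0 := by
  classical
  have e : ∀ T ∈ P.powerset, ((-1 : F) ^ (P.card - T.card))
      = (-1 : F) ^ P.card * (-1 : F) ^ T.card := by
    intro T hT
    have ht : T.card ≤ P.card := Finset.card_le_card (Finset.mem_powerset.mp hT)
    have h2 : ((-1 : F)) ^ T.card * (-1 : F) ^ T.card = 1 := by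
      rw [← pow_add]
      exact Even.neg_one_pow ⟨T.card, rfl⟩
    calc ((-1 : F) ^ (P.card - T.card))
        = (-1 : F) ^ (P.card - T.card) * ((-1 : F) ^ T.card * (-1 : F) ^ T.card) := by
          rw [h2, mul_one]
      _ = ((-1 : F) ^ (P.card - T.card) * (-1 : F) ^ T.card) * (-1 : F) ^ T.card := by ring
      _ = (-1 : F) ^ P.card * (-1 : F) ^ T.card := by
          rw [← pow_add, Nat.sub_add_cancel ht]
  have hzF : (∑ T ∈ P.powerset, ((-1 : F) ^ T.card)) = if P = ∅ then 1 else 0 := by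
    have hz := Finset.sum_powerset_neg_one_pow_card (x := P)
    have h2 := congrArg (fun z : ℤ => (z : F)) hz
    simp only [Int.cast_sum, Int.cast_pow, Int.cast_neg, Int.cast_one, Int.cast_ite,
      Int.cast_zero] at h2
    exact h2
  rw [Finset.sum_congr rfl e, ← Finset.mul_sum, hzF]
  by_cases hP : P = ∅
  · subst hP; simp
  · simp [hP]

theorem csum (R D : Finset ℕ) :
    (∑ S ∈ R.powerset, if D ⊆ S then ((-1 : F) ^ (R.card - S.card)) else 0)
      = if D = R then 1 else 0 := by
  classical
  by_cases hD : D ⊆ R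
  · rw [← Finset.sum_filter]
    have key : ∑ S ∈ R.powerset.filter (fun S => D ⊆ S), ((-1 : F) ^ (R.card - S.card))
        = ∑ T ∈ (R \ D).powerset, ((-1 : F) ^ ((R \ D).card - T.card)) := by
      refine Finset.sum_nbij' (fun S => S \ D) (fun T => D ∪ T) ?_ ?_ ?_ ?_ ?_
      · intro S hS
        rw [Finset.mem_filter, Finset.mem_powerset] at hS
        exact Finset.mem_powerset.mpr (Finset.sdiff_subset_sdiff hS.1 (le_refl D))
      · intro T hT
        rw [Finset.mem_powerset] at hT
        rw [Finset.mem_filter, Finset.mem_powerset]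
        exact ⟨Finset.union_subset hD (hT.trans Finset.sdiff_subset), Finset.subset_union_left⟩
      · intro S hS
        rw [Finset.mem_filter] at hS
        exact Finset.union_sdiff_of_subset hS.2
      · intro T hT
        rw [Finset.mem_powerset] at hT
        refine Finset.union_sdiff_cancel_left ?_
        exact Finset.disjoint_of_subset_right hT Finset.sdiff_disjoint.symm
      · intro S hS
        rw [Finset.mem_filter, Finset.mem_powerset] at hS
        show ((-1 : F) ^ (R.card - S.card)) = (-1 : F) ^ ((R \ D).card - (S \ D).card)
        congr 1
        have h1 : (S \ D).card = S.card - D.card := Finset.card_sdiff_of_subset hS.2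
        have h2 : (R \ D).card = R.card - D.card := Finset.card_sdiff_of_subset hD
        have h3 : D.card ≤ S.card := Finset.card_le_card hS.2
        have h4 : S.card ≤ R.card := Finset.card_le_card hS.1
        omega
    rw [key, powsum]
    have : (R \ D = ∅) ↔ (D = R) := by
      rw [Finset.sdiff_eq_empty_iff_subset]
      constructor
      · intro h; exact le_antisymm hD h
      · intro h; rw [h]
    by_cases h : D = R
    · rw [if_pos (this.mpr h), if_pos h]
    · rw [if_neg (fun hc => h (this.mp hc)), if_neg h]
  · rw [Finset.sum_eq_zero, if_neg (fun h : D = R => hD (by rw [h]))]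
    intro S hS
    rw [Finset.mem_powerset] at hS
    exact if_neg (fun h => hD (h.trans hS))

theorem Lam_monfn (R : Finset ℕ) (ε : F) (d : ℕ →₀ ℕ) (a : A') :
    Lam R ε (monfn (F := F) d a) = (if d.support = R then ε ^ deg d else 0) • a := by
  classical
  rw [Lam_apply]
  have e1 : ∀ S ∈ R.powerset, ((-1 : F) ^ (R.card - S.card)) •
      monfn (F := F) d a (fun k => if k ∈ S then ε else 0)
      = ((if d.support ⊆ S then ((-1 : F) ^ (R.card - S.card)) else 0) * ε ^ deg d) • a := by
    intro S _
    rw [monfn_pt, smul_smul]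
    congr 1
    by_cases h : d.support ⊆ S <;> simp [h, mul_comm]
  rw [Finset.sum_congr rfl e1, ← Finset.sum_smul, ← Finset.sum_mul, csum]
  by_cases h : d.support = R <;> simp [h]

end A'

end SP

namespace SP

variable {F : Type} [Field F] [CharZero F]
variable {A' : Type} [Ring A'] [Algebra F A']

open TensorProduct

theorem extraction (R : Finset ℕ) (b : A')
    (hb : monfn (F := F) (indic R) b ∈ Submodule.span F (GI (F := F) (indic R))) :
    b = 0 := by
  classical
  rw [Submodule.mem_span_set] at hb
  obtain ⟨cc, hsupp, hsum⟩ := hb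
  have hx : ∀ x ∈ cc.support, ∃ (m : ℕ) (y : A'), R.card < m ∧
      ∀ ε : F, Lam R ε (cc x • x) = ε ^ m • y := by
    intro x hxs
    obtain ⟨d, a, hdle, rfl⟩ := hsupp hxs
    by_cases hds : d.support = R
    · refine ⟨deg d, cc (monfn d a) • a, ?_, ?_⟩
      · have h1 : ∀ k ∈ R, 1 ≤ d k := by
          intro k hk
          rw [← hds] at hk
          exact Nat.one_le_iff_ne_zero.mpr (Finsupp.mem_support_iff.mp hk)
        have hnot : ¬ (∀ k, d k ≤ indic R k) := fun h => hdle (Finsupp.le_def.mpr h)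
        obtain ⟨k0, hk0⟩ := not_forall.mp hnot
        have hk0' : 1 ≤ d k0 := by omega
        have hk0R : k0 ∈ R := by
          rw [← hds, Finsupp.mem_support_iff]
          omega
        have hk0big : 1 < d k0 := by
          have := indic_apply R k0
          rw [if_pos hk0R] at this
          omega
        have hdeg : deg d = ∑ k ∈ R, d k := by rw [deg, Finsupp.sum, hds]
        have hcard : R.card = ∑ k ∈ R, 1 := Finset.card_eq_sum_ones R
        rw [hdeg, hcard]
        exact Finset.sum_lt_sum h1 ⟨k0, hk0R, hk0big⟩
      · intro ε
        rw [map_smul, Lam_monfn, if_pos hds, smul_comm]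
    · refine ⟨R.card + 1, 0, Nat.lt_succ_self _, ?_⟩
      intro ε
      rw [map_smul, Lam_monfn, if_neg hds, zero_smul, smul_zero, smul_zero]
  choose mm yy hmlt hLam using hx
  have key : ∀ ε : F, ε ^ R.card • b
      = ∑ x ∈ cc.support.attach, ε ^ (mm x.1 x.2) • (yy x.1 x.2) := by
    intro ε
    have hL : Lam R ε (monfn (F := F) (indic R) b) = ε ^ R.card • b := by
      rw [Lam_monfn, if_pos (indic_support R), deg_indic]
    have hR : Lam R ε (monfn (F := F) (indic R) b)
        = ∑ x ∈ cc.support.attach, ε ^ (mm x.1 x.2) • (yy x.1 x.2) := by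
      conv_lhs => rw [← hsum]
      rw [Finsupp.sum, map_sum, ← Finset.sum_attach cc.support
        (fun x => Lam R ε (cc x • x))]
      exact Finset.sum_congr rfl fun x _ => hLam x.1 x.2 ε
    rw [← hL, hR]
  rw [← Module.forall_dual_apply_eq_zero_iff F b]
  intro ξ
  set p : Polynomial F := Polynomial.monomial R.card (ξ b)
      - ∑ x ∈ cc.support.attach, Polynomial.monomial (mm x.1 x.2) (ξ (yy x.1 x.2)) with hp
  have hpeval : ∀ ε : F, Polynomial.eval ε p = 0 := by
    intro ε
    have hk := congrArg ξ (key ε)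
    rw [map_smul, map_sum, smul_eq_mul] at hk
    have hterm : ∀ x ∈ cc.support.attach,
        ξ (ε ^ (mm x.1 x.2) • (yy x.1 x.2)) = ξ (yy x.1 x.2) * ε ^ (mm x.1 x.2) := by
      intro x _
      rw [map_smul, smul_eq_mul, mul_comm]
    rw [Finset.sum_congr rfl hterm] at hk
    rw [hp, Polynomial.eval_sub, Polynomial.eval_monomial, Polynomial.eval_finset_sum]
    have : ∀ x ∈ cc.support.attach,
        Polynomial.eval ε (Polynomial.monomial (mm x.1 x.2) (ξ (yy x.1 x.2)))
          = ξ (yy x.1 x.2) * ε ^ (mm x.1 x.2) := fun x _ => Polynomial.eval_monomial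
    rw [Finset.sum_congr rfl this, ← hk]
    ring
  have hp0 : p = 0 := by
    apply Polynomial.funext
    intro ε
    rw [hpeval ε, Polynomial.eval_zero]
  have hcoeff := congrArg (fun q : Polynomial F => q.coeff R.card) hp0
  simp only [hp, Polynomial.coeff_sub, Polynomial.coeff_zero,
    Polynomial.finset_sum_coeff, Polynomial.coeff_monomial, if_pos rfl] at hcoeff
  have hzero : ∀ x ∈ cc.support.attach,
      (if mm x.1 x.2 = R.card then ξ (yy x.1 x.2) else 0) = 0 := by
    intro x _
    exact if_neg (fun h => (Nat.lt_irrefl _ (h ▸ hmlt x.1 x.2)))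
  rw [Finset.sum_congr rfl hzero, Finset.sum_const_zero, sub_zero] at hcoeff
  exact hcoeff

end SP

/-- Let `A` be an `H`-basic algebra with radical nilpotency index
`n_A`, and let `f` be a multilinear `H`-nonidentity with property `K`: `f` vanishes on
every evaluation on `A` (with substitutions from `Ā ∪ J(A)`) having fewer than `n_A - 1`
radical substitutions.  Then property `K` is strictly Phoenix: every multilinear
`H`-polynomial `f'` in the `H`-T-ideal generated by `f` which is a nonidentity of `A`
also has property `K`. -/
theorem property_K_strictly_phoenix
    (F : Type) [Field F] [CharZero F] (H : Type) [Ring H] [HopfAlgebra F H]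
    [FiniteDimensional F H] [IsSemisimpleRing H]
    (𝔉 : HMA F H (FreeHMA F H ℕ)) (hfree : IsFreeAction F H 𝔉)
    (A : FDHMA F H) (hbasic : IsHBasic F H A)
    (Sbar : Subalgebra F A.carrier)
    (hcompl : IsCompl (Subalgebra.toSubmodule Sbar) (jacRad F A.carrier))
    (hstable : ∀ (h : H), ∀ x ∈ Sbar, A.M.act h x ∈ Sbar)
    (f : FreeHMA F H ℕ) (supp : Finset ℕ)
    (hml : MultilinearOn F H supp supp f)
    (hnonid : f ∉ A.ids F H)
    -- `f` has property `K`: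
    (hK : ∀ v : ℕ → A.carrier,
      (∀ k, v k ∈ (Sbar : Set A.carrier) ∪ (jacRad F A.carrier : Set A.carrier)) →
      ((↑supp : Set ℕ) ∩ {k | v k ∈ jacRad F A.carrier}).ncard < nilIndex A.carrier - 1 →
      A.M.eval F H v f = 0)
    (f' : FreeHMA F H ℕ) (supp' : Finset ℕ)
    (hml' : MultilinearOn F H supp' supp' f')
    (hf' : f' ∈ hTIdealSpan F H 𝔉 {f}) (hnonid' : f' ∉ A.ids F H) :
    -- then `f'` has property `K`:
    ∀ v : ℕ → A.carrier,
      (∀ k, v k ∈ (Sbar : Set A.carrier) ∪ (jacRad F A.carrier : Set A.carrier)) →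
      ((↑supp' : Set ℕ) ∩ {k | v k ∈ jacRad F A.carrier}).ncard < nilIndex A.carrier - 1 →
      A.M.eval F H v f' = 0 := by
  classical
  intro v hv1 hv2
  rcases Nat.eq_zero_or_pos (nilIndex A.carrier - 1) with hn1 | hn1pos
  · rw [hn1] at hv2; exact absurd hv2 (Nat.not_lt_zero _)
  have hAnt : Nontrivial A.carrier := by
    by_contra hnt
    apply hnonid'
    intro w
    have : Subsingleton A.carrier := not_nontrivial_iff_subsingleton.mp hnt
    exact Subsingleton.elim _ _
  have h1Sbar : (1 : A.carrier) ∈ Sbar := Sbar.one_mem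
  have h1J : (1 : A.carrier) ∉ jacRad F A.carrier := by
    intro h1
    have htop : ((⊥ : Ideal A.carrier).jacobson) = ⊤ := Ideal.eq_top_iff_one _ |>.mpr h1
    have hbot : (⊥ : Ideal A.carrier) = ⊤ := Ideal.jacobson_eq_top_iff.mp htop
    have hmem : (1 : A.carrier) ∈ (⊥ : Ideal A.carrier) := by rw [hbot]; trivial
    rw [Ideal.mem_bot] at hmem
    exact one_ne_zero hmem
  set R : Finset ℕ := supp'.filter (fun k => v k ∈ jacRad F A.carrier) with hRdef
  have hRsupp : R ⊆ supp' := Finset.filter_subset _ _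
  have hvR : ∀ k ∈ supp', k ∉ R → v k ∈ Sbar := by
    intro k hk hkR
    rcases hv1 k with h | h
    · exact h
    · exact absurd (Finset.mem_filter.mpr ⟨hk, h⟩) hkR
  have hvRJ : ∀ k ∈ R, v k ∈ jacRad F A.carrier := fun k hk => (Finset.mem_filter.mp hk).2
  have hRcard : R.card < nilIndex A.carrier - 1 := by
    have hseteq : (↑supp' : Set ℕ) ∩ {k | v k ∈ jacRad F A.carrier} = ↑R := by
      ext k
      simp only [Set.mem_inter_iff, Finset.coe_filter, Set.mem_setOf_eq, hRdef,
        Finset.mem_coe, Finset.mem_filter]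
    rw [← Set.ncard_coe_finset R, ← hseteq]
    exact hv2
  -- splitting and disjointness
  have hsplit : ∀ x : A.carrier, ∃ s ∈ Sbar, ∃ j ∈ jacRad F A.carrier, s + j = x := by
    intro x
    have hx : x ∈ (Subalgebra.toSubmodule Sbar) ⊔ (jacRad F A.carrier) := by
      rw [hcompl.sup_eq_top]; trivial
    obtain ⟨s, hs, j, hj, hsj⟩ := Submodule.mem_sup.mp hx
    exact ⟨s, Sbar.mem_toSubmodule.mp hs, j, hj, hsj⟩
  have hdisj : ∀ x : A.carrier, x ∈ Sbar → x ∈ jacRad F A.carrier → x = 0 := by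
    intro x hxS hxJ
    exact (Submodule.disjoint_def.mp hcompl.disjoint) x (Sbar.mem_toSubmodule.mpr hxS) hxJ
  -- the key vanishing lemma for f on nearly-semisimple valuations
  have hKZ : ∀ (Z : Finset ℕ), ∀ a : ℕ → A.carrier,
      (Z ∪ supp.filter (fun k => a k ∉ Sbar)).card < nilIndex A.carrier - 1 →
      (∀ k ∈ supp, k ∉ Z → a k ∈ (Sbar : Set A.carrier) ∪ (jacRad F A.carrier : Set A.carrier)) →
      A.M.eval F H a f = 0 := by
    intro Z
    induction Z using Finset.induction_on with
    | empty =>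
      intro a hcard hvals
      by_cases hz : ∃ k ∈ supp, a k = 0
      · obtain ⟨k, hk, hk0⟩ := hz
        have ha : a = Function.update a k 0 := by
          funext m
          by_cases hm : m = k
          · subst hm; rw [Function.update_self, hk0]
          · rw [Function.update_of_ne hm]
        rw [ha]
        exact SP.ml_zero A.M hml hk a
      · push_neg at hz
        have heq : A.M.eval F H a f
            = A.M.eval F H (fun k => if k ∈ supp then a k else 1) f := by
          refine SP.eval_congr A.M hml.1 ?_
          intro k hk
          rw [if_pos (Finset.mem_coe.mp hk)]
        rw [heq]
        apply hK
        · intro k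
          by_cases hk : k ∈ supp
          · simpa [hk] using hvals k hk (Finset.notMem_empty k)
          · simp only [hk, if_false]
            left
            exact h1Sbar
        · have hsub : (↑supp : Set ℕ) ∩ {k | (if k ∈ supp then a k else 1) ∈ jacRad F A.carrier}
              ⊆ ↑(supp.filter fun k => a k ∉ Sbar) := by
            rintro k ⟨hk1, hk2⟩
            have hks : k ∈ supp := Finset.mem_coe.mp hk1
            rw [Set.mem_setOf_eq, if_pos hks] at hk2
            refine Finset.mem_coe.mpr (Finset.mem_filter.mpr ⟨hks, ?_⟩)
            intro hSb
            exact hz k hks (hdisj _ hSb hk2)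
          calc ((↑supp : Set ℕ) ∩ _).ncard
              ≤ (↑(supp.filter fun k => a k ∉ Sbar) : Set ℕ).ncard :=
                Set.ncard_le_ncard hsub (Finset.finite_toSet _)
            _ = (supp.filter fun k => a k ∉ Sbar).card := Set.ncard_coe_finset _
            _ ≤ ((∅ : Finset ℕ) ∪ supp.filter fun k => a k ∉ Sbar).card :=
                Finset.card_le_card Finset.subset_union_right
            _ < nilIndex A.carrier - 1 := hcard
    | insert _ _ hkZ =>
      rename_i k Z' ih
      intro a hcard hvals
      by_cases hks : k ∈ supp
      · obtain ⟨s, hs, j, hj, hsj⟩ := hsplit (a k)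
        have ha : Function.update a k (s + j) = a := by
          rw [hsj]; exact Function.update_eq_self k a
        rw [← ha, SP.ml_add A.M hml hks a s j]
        have hsubS : Z' ∪ (supp.filter fun m => Function.update a k s m ∉ Sbar)
            ⊆ insert k Z' ∪ (supp.filter fun m => a m ∉ Sbar) := by
          intro m hm
          rcases Finset.mem_union.mp hm with hm | hm
          · exact Finset.mem_union_left _ (Finset.mem_insert_of_mem hm)
          · obtain ⟨hm1, hm2⟩ := Finset.mem_filter.mp hm
            by_cases hmk : m = k
            · subst hmk
              rw [Function.update_self] at hm2
              exact absurd hs hm2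
            · rw [Function.update_of_ne hmk] at hm2
              exact Finset.mem_union_right _ (Finset.mem_filter.mpr ⟨hm1, hm2⟩)
        have hsubJ : Z' ∪ (supp.filter fun m => Function.update a k j m ∉ Sbar)
            ⊆ insert k Z' ∪ (supp.filter fun m => a m ∉ Sbar) := by
          intro m hm
          rcases Finset.mem_union.mp hm with hm | hm
          · exact Finset.mem_union_left _ (Finset.mem_insert_of_mem hm)
          · obtain ⟨hm1, hm2⟩ := Finset.mem_filter.mp hm
            by_cases hmk : m = k
            · subst hmk
              exact Finset.mem_union_left _ (Finset.mem_insert_self _ _)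
            · rw [Function.update_of_ne hmk] at hm2
              exact Finset.mem_union_right _ (Finset.mem_filter.mpr ⟨hm1, hm2⟩)
        have t1 : A.M.eval F H (Function.update a k s) f = 0 := by
          apply ih
          · exact lt_of_le_of_lt (Finset.card_le_card hsubS) hcard
          · intro m hm hmZ
            by_cases hmk : m = k
            · subst hmk; rw [Function.update_self]; left; exact hs
            · rw [Function.update_of_ne hmk]
              exact hvals m hm (fun hc => hmZ (Finset.mem_of_mem_insert_of_ne hc hmk))
        have t2 : A.M.eval F H (Function.update a k j) f = 0 := by
          apply ih
          · exact lt_of_le_of_lt (Finset.card_le_card hsubJ) hcard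
          · intro m hm hmZ
            by_cases hmk : m = k
            · subst hmk; rw [Function.update_self]; right; exact hj
            · rw [Function.update_of_ne hmk]
              exact hvals m hm (fun hc => hmZ (Finset.mem_of_mem_insert_of_ne hc hmk))
        rw [t1, t2, add_zero]
      · apply ih
        · refine lt_of_le_of_lt (Finset.card_le_card ?_) hcard
          exact Finset.union_subset_union (Finset.subset_insert _ _) (le_refl _)
        · intro m hm hmZ
          refine hvals m hm (fun hc => ?_)
          rcases Finset.mem_insert.mp hc with hc | hc
          · exact hks (hc ▸ hm)
          · exact hmZ hc
  -- f belongs to the candidate H-T-ideal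
  have hMW1 : (1 : (ℕ → F) → A.carrier) ∈ Submodule.span F (SP.GW (F := F) Sbar) :=
    Submodule.subset_span ⟨0, 1, fun _ => h1Sbar, SP.monfn_one.symm⟩
  have hMWmul : ∀ x ∈ Submodule.span F (SP.GW (F := F) Sbar),
      ∀ y ∈ Submodule.span F (SP.GW (F := F) Sbar),
      x * y ∈ Submodule.span F (SP.GW (F := F) Sbar) :=
    fun x hx y hy => SP.span_mul_span_of_sets (SP.GW_mul Sbar) hx hy
  have hfG : ∀ u : ℕ → ((ℕ → F) → A.carrier),
      (∀ k, u k ∈ Submodule.span F (SP.GW (F := F) Sbar)) →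
      (SP.funHMA (ℕ → F) A.M).eval F H u f ∈ Submodule.span F (SP.GI (F := F) (SP.indic R)) := by
    intro u hu
    have main : ∀ (T : Finset ℕ), T ⊆ supp → ∀ w : ℕ → ((ℕ → F) → A.carrier),
        (∀ k ∈ T, w k ∈ Submodule.span F (SP.GW (F := F) Sbar)) →
        (∀ k ∈ supp, k ∉ T → w k ∈ SP.GW (F := F) Sbar) →
        (∀ k, k ∉ supp → w k = 1) →
        (SP.funHMA (ℕ → F) A.M).eval F H w f
          ∈ Submodule.span F (SP.GI (F := F) (SP.indic R)) := by
      intro T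
      induction T using Finset.induction_on with
      | empty =>
        intro _ w _ hw2 hw3
        have hGWall : ∀ k, ∃ d a, (d = 0 → a ∈ Sbar) ∧ w k = SP.monfn (F := F) d a := by
          intro k
          by_cases hk : k ∈ supp
          · exact hw2 k hk (Finset.notMem_empty k)
          · exact ⟨0, 1, fun _ => h1Sbar, by rw [hw3 k hk, SP.monfn_one]⟩
        choose dd aa hSb hwk using hGWall
        have heval : (SP.funHMA (ℕ → F) A.M).eval F H w f
            = SP.monfn (F := F) (∑ k ∈ supp, dd k) (A.M.eval F H aa f) := by
          funext c
          rw [SP.funHMA_eval_apply]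
          have e0 : (fun k => w k c) = fun k => SP.cpow c (dd k) • aa k := by
            funext k; rw [hwk k]; rfl
          have e1 : A.M.eval F H (fun k => w k c) f
              = A.M.eval F H (fun k => if k ∈ supp then SP.cpow c (dd k) • aa k else aa k) f := by
            rw [e0]
            refine SP.eval_congr A.M hml.1 ?_
            intro k hk
            rw [if_pos (Finset.mem_coe.mp hk)]
          rw [e1, SP.ml_scale A.M hml supp (le_refl _) (fun k => SP.cpow c (dd k)) aa]
          show _ = SP.cpow c (∑ k ∈ supp, dd k) • _
          rw [SP.cpow_finset_sum]
        rw [heval]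
        by_cases hDle : (∑ k ∈ supp, dd k) ≤ SP.indic R
        · have hzero : A.M.eval F H aa f = 0 := by
            set Z : Finset ℕ := supp.filter (fun k => dd k ≠ 0) with hZdef
            have hφ : ∀ k : ℕ, ∃ m, k ∈ Z → m ∈ (dd k).support := by
              intro k
              by_cases hk : k ∈ Z
              · obtain ⟨m, hm⟩ :=
                  Finsupp.support_nonempty_iff.mpr (Finset.mem_filter.mp hk).2
                exact ⟨m, fun _ => hm⟩
              · exact ⟨0, fun h => absurd h hk⟩
            choose φ hφm using hφ
            have hone : ∀ k ∈ Z, 1 ≤ dd k (φ k) := fun k hk =>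
              Nat.one_le_iff_ne_zero.mpr (Finsupp.mem_support_iff.mp (hφm k hk))
            have hchi : ∀ m : ℕ, (∑ k' ∈ supp, dd k') m ≤ 1 := by
              intro m
              have h3 : (∑ k' ∈ supp, dd k') m ≤ SP.indic R m := Finsupp.le_def.mp hDle _
              have h4 := SP.indic_apply R m
              by_cases hR : m ∈ R
              · rw [if_pos hR] at h4; omega
              · rw [if_neg hR] at h4; omega
            have hφR : ∀ k ∈ Z, φ k ∈ R := by
              intro k hk
              have h1 := hone k hk
              have h2 : dd k (φ k) ≤ (∑ k' ∈ supp, dd k') (φ k) := by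
                rw [Finsupp.finset_sum_apply]
                exact Finset.single_le_sum (f := fun i => dd i (φ k))
                  (fun _ _ => Nat.zero_le _) ((Finset.mem_filter.mp hk).1)
              have h3 : (∑ k' ∈ supp, dd k') (φ k) ≤ SP.indic R (φ k) :=
                Finsupp.le_def.mp hDle _
              have h4 := SP.indic_apply R (φ k)
              by_cases hR : φ k ∈ R
              · exact hR
              · rw [if_neg hR] at h4; omega
            have hinj : Set.InjOn φ ↑Z := by
              intro x hx y hy hxy
              by_contra hne
              have hxZ : x ∈ Z := Finset.mem_coe.mp hx
              have hyZ : y ∈ Z := Finset.mem_coe.mp hy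
              have h1 := hone x hxZ
              have h2 : 1 ≤ dd y (φ x) := by rw [hxy]; exact hone y hyZ
              have hpair : dd x (φ x) + dd y (φ x) ≤ (∑ k' ∈ supp, dd k') (φ x) := by
                rw [Finsupp.finset_sum_apply]
                calc dd x (φ x) + dd y (φ x)
                    = ∑ m ∈ ({x, y} : Finset ℕ), dd m (φ x) :=
                      (Finset.sum_pair (f := fun m => dd m (φ x)) hne).symm
                  _ ≤ ∑ m ∈ supp, dd m (φ x) := by
                      refine Finset.sum_le_sum_of_subset ?_
                      intro m hm
                      rcases Finset.mem_insert.mp hm with hm | hm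
                      · subst hm; exact (Finset.mem_filter.mp hxZ).1
                      · rw [Finset.mem_singleton] at hm
                        subst hm; exact (Finset.mem_filter.mp hyZ).1
              have := hchi (φ x)
              omega
            have hZcard : Z.card ≤ R.card := Finset.card_le_card_of_injOn φ hφR hinj
            apply hKZ Z
            · have hsub2 : (supp.filter fun k => aa k ∉ Sbar) ⊆ Z := by
                intro k hk
                obtain ⟨hk1, hk2⟩ := Finset.mem_filter.mp hk
                refine Finset.mem_filter.mpr ⟨hk1, ?_⟩
                intro hd0
                exact hk2 (hSb k hd0)
              calc (Z ∪ supp.filter fun k => aa k ∉ Sbar).card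
                  ≤ (Z ∪ Z).card := Finset.card_le_card
                    (Finset.union_subset_union (le_refl _) hsub2)
                _ = Z.card := by rw [Finset.union_self]
                _ ≤ R.card := hZcard
                _ < nilIndex A.carrier - 1 := hRcard
            · intro k hk hkZ
              left
              refine hSb k ?_
              by_contra hd0
              exact hkZ (Finset.mem_filter.mpr ⟨hk, hd0⟩)
          rw [hzero, SP.monfn_zero]
          exact Submodule.zero_mem _
        · exact Submodule.subset_span ⟨_, _, hDle, rfl⟩
      | insert _ _ hkT =>
        rename_i k T' ihT
        intro hTs w hw1 hw2 hw3
        have hks : k ∈ supp := hTs (Finset.mem_insert_self k T')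
        have hT's : T' ⊆ supp := fun x hx => hTs (Finset.mem_insert_of_mem hx)
        have h0 : w k ∈ Submodule.span F (SP.GW (F := F) Sbar) :=
          hw1 k (Finset.mem_insert_self k T')
        have hmot : ∀ x ∈ Submodule.span F (SP.GW (F := F) Sbar),
            (SP.funHMA (ℕ → F) A.M).eval F H (Function.update w k x) f
              ∈ Submodule.span F (SP.GI (F := F) (SP.indic R)) := by
          intro x hx
          induction hx using Submodule.span_induction with
          | mem y hy =>
            apply ihT hT's (Function.update w k y)
            · intro m hm
              have hmk : m ≠ k := fun h => hkT (h ▸ hm)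
              rw [Function.update_of_ne hmk]
              exact hw1 m (Finset.mem_insert_of_mem hm)
            · intro m hm hmT
              by_cases hmk : m = k
              · subst hmk; rw [Function.update_self]; exact hy
              · rw [Function.update_of_ne hmk]
                exact hw2 m hm (fun hc => hmT (Finset.mem_of_mem_insert_of_ne hc hmk))
            · intro m hm
              have hmk : m ≠ k := fun h => hm (h ▸ hks)
              rw [Function.update_of_ne hmk]
              exact hw3 m hm
          | zero =>
            rw [SP.ml_zero (SP.funHMA (ℕ → F) A.M) hml hks w]
            exact Submodule.zero_mem _
          | add x₁ x₂ hx₁ hx₂ ih₁ ih₂ =>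
            rw [SP.ml_add (SP.funHMA (ℕ → F) A.M) hml hks w x₁ x₂]
            exact Submodule.add_mem _ ih₁ ih₂
          | smul r x₁ hx₁ ih₁ =>
            rw [SP.ml_smul (SP.funHMA (ℕ → F) A.M) hml hks w r x₁]
            exact Submodule.smul_mem _ r ih₁
        have := hmot (w k) h0
        rwa [Function.update_eq_self] at this
    have heq : (SP.funHMA (ℕ → F) A.M).eval F H u f
        = (SP.funHMA (ℕ → F) A.M).eval F H (fun k => if k ∈ supp then u k else 1) f := by
      refine SP.eval_congr (SP.funHMA (ℕ → F) A.M) hml.1 ?_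
      intro k hk
      rw [if_pos (Finset.mem_coe.mp hk)]
    rw [heq]
    apply main supp (le_refl _)
    · intro k hk
      rw [if_pos hk]
      exact hu k
    · intro k hk hk'
      exact absurd hk hk'
    · intro k hk
      rw [if_neg hk]
  -- the candidate set is an H-T-ideal
  have hHT : IsHTIdeal F H 𝔉 {g | ∀ u : ℕ → ((ℕ → F) → A.carrier),
      (∀ k, u k ∈ Submodule.span F (SP.GW (F := F) Sbar)) →
      (SP.funHMA (ℕ → F) A.M).eval F H u g
        ∈ Submodule.span F (SP.GI (F := F) (SP.indic R))} := by
    refine ⟨?_, ?_, ?_, ?_⟩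
    · intro u hu
      rw [map_zero]
      exact Submodule.zero_mem _
    · intro g₁ g₂ h₁ h₂ u hu
      rw [map_add]
      exact Submodule.add_mem _ (h₁ u hu) (h₂ u hu)
    · intro g₁ g₂ h₁
      have hAll : ∀ (g : FreeHMA F H ℕ) (u : ℕ → ((ℕ → F) → A.carrier)),
          (∀ k, u k ∈ Submodule.span F (SP.GW (F := F) Sbar)) →
          (SP.funHMA (ℕ → F) A.M).eval F H u g
            ∈ Submodule.span F (SP.GAll (F := F) (A' := A.carrier)) := by
        intro g u hu
        refine SP.eval_mem (SP.funHMA (ℕ → F) A.M) _ ?_ ?_ ?_ u ?_ g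
        · exact Submodule.subset_span ⟨0, 1, SP.monfn_one.symm⟩
        · exact fun x hx y hy => SP.span_mul_span_of_sets SP.GAll_mul hx hy
        · exact fun h x hx => SP.GAll_act A.M h x hx
        · intro k
          refine Submodule.span_mono ?_ (hu k)
          rintro x ⟨d, a, _, rfl⟩
          exact ⟨d, a, rfl⟩
      constructor
      · intro u hu
        rw [map_mul]
        exact SP.span_mul_span_of_sets (SP.GAll_mul_GI (SP.indic R)) (hAll g₂ u hu) (h₁ u hu)
      · intro u hu
        rw [map_mul]
        exact SP.span_mul_span_of_sets (SP.GI_mul_GAll (SP.indic R)) (h₁ u hu) (hAll g₂ u hu)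
    · intro w g hg u hu
      rw [SP.eval_eval 𝔉 hfree (SP.funHMA (ℕ → F) A.M) u w g]
      apply hg
      intro k
      refine SP.eval_mem (SP.funHMA (ℕ → F) A.M) _ hMW1 hMWmul ?_ u hu (w k)
      exact fun h x hx => SP.GW_act Sbar A.M hstable h x hx
  -- hence f' is in the candidate set
  have hf'G := hf' _ ⟨hHT, by
    intro g hg
    rw [Set.mem_singleton_iff] at hg
    subst hg
    exact hfG⟩
  -- evaluate at the marked valuation
  have huMW : ∀ k : ℕ, (if k ∈ R then SP.monfn (F := F) (Finsupp.single k 1) (v k)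
      else SP.monfn (F := F) 0 (if k ∈ supp' then v k else 1))
        ∈ Submodule.span F (SP.GW (F := F) Sbar) := by
    intro k
    by_cases hkR : k ∈ R
    · rw [if_pos hkR]
      refine Submodule.subset_span ⟨Finsupp.single k 1, v k, ?_, rfl⟩
      intro h0
      exact absurd (Finsupp.single_eq_zero.mp h0) one_ne_zero
    · rw [if_neg hkR]
      refine Submodule.subset_span ⟨0, _, fun _ => ?_, rfl⟩
      by_cases hks : k ∈ supp'
      · rw [if_pos hks]
        exact hvR k hks hkR
      · rw [if_neg hks]
        exact h1Sbar
  have hval := hf'G (fun k =>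
    if k ∈ R then SP.monfn (F := F) (Finsupp.single k 1) (v k)
    else SP.monfn (F := F) 0 (if k ∈ supp' then v k else 1)) huMW
  have hcomp : (SP.funHMA (ℕ → F) A.M).eval F H (fun k =>
      if k ∈ R then SP.monfn (F := F) (Finsupp.single k 1) (v k)
      else SP.monfn (F := F) 0 (if k ∈ supp' then v k else 1)) f'
      = SP.monfn (F := F) (SP.indic R)
          (A.M.eval F H (fun k => if k ∈ supp' then v k else 1) f') := by
    funext c
    rw [SP.funHMA_eval_apply]
    have e1 : A.M.eval F H (fun k =>
        (if k ∈ R then SP.monfn (F := F) (Finsupp.single k 1) (v k)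
          else SP.monfn (F := F) 0 (if k ∈ supp' then v k else 1)) c) f'
        = A.M.eval F H (fun k => if k ∈ R then c k • (if k ∈ supp' then v k else 1)
            else (if k ∈ supp' then v k else 1)) f' := by
      refine SP.eval_congr A.M hml'.1 ?_
      intro k hk
      have hks : k ∈ supp' := Finset.mem_coe.mp hk
      by_cases hkR : k ∈ R
      · rw [if_pos hkR, if_pos hkR, if_pos hks]
        show SP.cpow c (Finsupp.single k 1) • v k = c k • v k
        rw [SP.cpow_single]
      · rw [if_neg hkR, if_neg hkR]
        show SP.cpow c 0 • _ = _
        rw [SP.cpow_zero, one_smul]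
    rw [e1, SP.ml_scale A.M hml' R hRsupp (fun k => c k)
      (fun k => if k ∈ supp' then v k else 1)]
    show _ = SP.cpow c (SP.indic R) • _
    congr 1
    simp only [SP.indic]
    rw [SP.cpow_finset_sum]
    exact Finset.prod_congr rfl fun k _ => (SP.cpow_single c k).symm
  rw [hcomp] at hval
  have hvt0 : A.M.eval F H (fun k => if k ∈ supp' then v k else 1) f' = 0 :=
    SP.extraction R _ hval
  have hfin : A.M.eval F H v f'
      = A.M.eval F H (fun k => if k ∈ supp' then v k else 1) f' := by
    refine SP.eval_congr A.M hml'.1 ?_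
    intro k hk
    rw [if_pos (Finset.mem_coe.mp hk)]
  rw [hfin, hvt0]
end
end

section
/- Let W be an H-module C-algebra over a Noetherian commutative ring C, with W Noetherian, such that W has no pair of nonzero H-ideals with zero intersection (H-irreducible). If z ∈ C acts on W non-nilpotently and there is k with ann_W(z^k) = ann_W(z^{k+1}) = ⋯, then ann_W(z^k) ∩ z^k W = 0, and consequently ann_W(z^k) = 0, i.e., z is not a zero divisor on W. -/
noncomputable section
open TensorProduct

/-! ## The free `H`-module algebra -/

variable (F : Type) [Field F] (H : Type) [Ring H] [Algebra F H]

variable {V : Type}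

/-! ## `H`-module algebras -/

variable [Coalgebra F H]

variable {A : Type} [Ring A] [Algebra F A]

/-! Because `z` is central and commutes with the `H`-action, `ann_W(z^k)` and `z^k W` are
`H`-ideals. They meet trivially: if `z^k w = 0` and `w = z^k y`, then `z^{2k} y = 0`, so
`w = z^k y = 0` by stabilization. By `H`-irreducibility one of them is zero, and it cannot
be `z^k W` since `z` is not nilpotent. -/

def HMA.IsHIdeal (M : HMA F H A) (I : Submodule F A) : Prop :=
  (∀ a : A, ∀ x ∈ I, a * x ∈ I ∧ x * a ∈ I) ∧ ∀ h : H, ∀ x ∈ I, M.act h x ∈ I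

def HMA.IsHIrreducible (M : HMA F H A) : Prop :=
  ∀ I J : Submodule F A, M.IsHIdeal F H I → M.IsHIdeal F H J → I ⊓ J = ⊥ → I = ⊥ ∨ J = ⊥

theorem LinearMap.ker_mulLeft_inf_range_mulLeft_eq_bot {R S : Type*} [Semiring R]
    [NonUnitalNonAssocSemiring S] [Module R S] [SMulCommClass R S S] {c : S}
    (hc : ∀ y, c * (c * y) = 0 → c * y = 0) :
    ker (mulLeft R c) ⊓ range (mulLeft R c) = ⊥ := by
  rw [eq_bot_iff]
  rintro _ ⟨hw, y, rfl⟩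
  exact (Submodule.mem_bot R).2 (hc y hw)

section CentralEquivariant

variable {M : HMA F H A} {c : A}

theorem HMA.isHIdeal_ker_mulLeft (hc : ∀ a, c * a = a * c)
    (hact : ∀ h w, M.act h (c * w) = c * M.act h w) :
    M.IsHIdeal F H (LinearMap.ker (LinearMap.mulLeft F c)) := by
  simp only [HMA.IsHIdeal, LinearMap.mem_ker, LinearMap.mulLeft_apply]
  refine ⟨fun a x hx => ⟨?_, ?_⟩, fun h x hx => ?_⟩
  · rw [← mul_assoc, hc, mul_assoc, hx, mul_zero]
  · rw [← mul_assoc, hx, zero_mul]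
  · rw [← hact, hx, map_zero]

theorem HMA.isHIdeal_range_mulLeft (hc : ∀ a, c * a = a * c)
    (hact : ∀ h w, M.act h (c * w) = c * M.act h w) :
    M.IsHIdeal F H (LinearMap.range (LinearMap.mulLeft F c)) := by
  simp only [HMA.IsHIdeal, LinearMap.mem_range, LinearMap.mulLeft_apply]
  refine ⟨fun a x ⟨y, hy⟩ => ⟨⟨a * y, ?_⟩, ⟨y * a, ?_⟩⟩, fun h x ⟨y, hy⟩ => ⟨M.act h y, ?_⟩⟩
  · rw [← mul_assoc, hc, mul_assoc, hy]
  · rw [← mul_assoc, hy]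
  · rw [← hact, hy]

theorem HMA.eq_zero_of_mul_eq_zero_of_isHIrreducible (hc : ∀ a, c * a = a * c)
    (hact : ∀ h w, M.act h (c * w) = c * M.act h w) (hirr : M.IsHIrreducible F H)
    (hc0 : c ≠ 0) (hstab : ∀ y, c * (c * y) = 0 → c * y = 0) {w : A} (hw : c * w = 0) :
    w = 0 := by
  rcases hirr _ _ (isHIdeal_ker_mulLeft F H hc hact) (isHIdeal_range_mulLeft F H hc hact)
    (LinearMap.ker_mulLeft_inf_range_mulLeft_eq_bot hstab) with hker | hrange
  · exact LinearMap.ker_eq_bot'.1 hker w hw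
  · have hc1 : c * 1 = 0 := LinearMap.congr_fun (LinearMap.range_eq_bot.1 hrange) 1
    exact absurd ((mul_one c).symm.trans hc1) hc0

end CentralEquivariant

theorem H_irreducible_non_nilpotent_not_zero_divisor_general
    (F : Type) [Field F] (H : Type) [Ring H] [HopfAlgebra F H]
    (C : Type) [CommRing C]
    (W : Type) [Ring W] [Algebra F W] [Algebra C W]
    (MW : HMA F H W)
    (hCequiv : ∀ (h : H) (c : C) (w : W), MW.act h (c • w) = c • MW.act h w)
    -- `W` is `H`-irreducible: no two nonzero `H`-ideals intersect trivially
    (hirr : ∀ I J : Submodule F W,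
      (∀ a : W, ∀ x ∈ I, a * x ∈ I ∧ x * a ∈ I) → (∀ (h : H), ∀ x ∈ I, MW.act h x ∈ I) →
      (∀ a : W, ∀ x ∈ J, a * x ∈ J ∧ x * a ∈ J) → (∀ (h : H), ∀ x ∈ J, MW.act h x ∈ J) →
      I ⊓ J = ⊥ → I = ⊥ ∨ J = ⊥)
    (z : C)
    -- `z` acts non-nilpotently on `W`
    (hznil : ∀ m : ℕ, algebraMap C W z ^ m ≠ 0)
    (k : ℕ)
    -- the ascending chain of annihilators stabilizes at `k`
    (hstab : ∀ m, k ≤ m → ∀ w : W,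
      algebraMap C W z ^ m * w = 0 ↔ algebraMap C W z ^ k * w = 0) :
    (∀ w : W, algebraMap C W z ^ k * w = 0 →
      (∃ y : W, w = algebraMap C W z ^ k * y) → w = 0) ∧
    (∀ w : W, algebraMap C W z ^ k * w = 0 → w = 0) ∧
    (∀ w : W, algebraMap C W z * w = 0 → w = 0) := by
  set Z : W := algebraMap C W z
  have hcomm (a : W) : Z ^ k * a = a * Z ^ k := by
    rw [← map_pow]
    exact Algebra.commutes _ _
  have hact (h : H) (w : W) : MW.act h (Z ^ k * w) = Z ^ k * MW.act h w := by
    rw [← map_pow, ← Algebra.smul_def, ← Algebra.smul_def, hCequiv]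
  have hstab_two (y : W) (hy : Z ^ k * (Z ^ k * y) = 0) : Z ^ k * y = 0 :=
    (hstab (k + k) le_add_self y).1 (by rwa [pow_add, mul_assoc])
  have hreg (w : W) (hw : Z ^ k * w = 0) : w = 0 :=
    MW.eq_zero_of_mul_eq_zero_of_isHIrreducible F H hcomm hact
      (fun I J hI hJ => hirr I J hI.1 hI.2 hJ.1 hJ.2) (hznil k) hstab_two hw
  refine ⟨?_, hreg, fun w hw => hreg w ?_⟩
  · rintro w hw ⟨y, rfl⟩
    exact hstab_two y hw
  · exact (hstab (k + 1) k.le_succ w).1 (by rw [pow_succ, mul_assoc, hw, mul_zero])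

/-- Let `W` be an `H`-module `C`-algebra over a commutative Noetherian
ring `C`, with `W` Noetherian, having no pair of nonzero `H`-ideals with zero
intersection (`H`-irreducible).  If `z ∈ C` acts on `W` non-nilpotently and `k` is such
that `ann_W(z^k) = ann_W(z^{k+1}) = ⋯`, then `ann_W(z^k) ∩ z^k W = 0`, and consequently
`ann_W(z^k) = 0`, i.e. `z` is not a zero divisor on `W`. -/
theorem H_irreducible_non_nilpotent_not_zero_divisor
    (F : Type) [Field F] (H : Type) [Ring H] [HopfAlgebra F H] [FiniteDimensional F H]
    (C : Type) [CommRing C] [Algebra F C] [IsNoetherianRing C]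
    (W : Type) [Ring W] [Algebra F W] [Algebra C W] [IsScalarTower F C W]
    [IsNoetherian C W]
    (MW : HMA F H W)
    (hCequiv : ∀ (h : H) (c : C) (w : W), MW.act h (c • w) = c • MW.act h w)
    -- `W` is `H`-irreducible: no two nonzero `H`-ideals intersect trivially
    (hirr : ∀ I J : Submodule F W,
      (∀ a : W, ∀ x ∈ I, a * x ∈ I ∧ x * a ∈ I) → (∀ (h : H), ∀ x ∈ I, MW.act h x ∈ I) →
      (∀ a : W, ∀ x ∈ J, a * x ∈ J ∧ x * a ∈ J) → (∀ (h : H), ∀ x ∈ J, MW.act h x ∈ J) →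
      I ⊓ J = ⊥ → I = ⊥ ∨ J = ⊥)
    (z : C)
    -- `z` acts non-nilpotently on `W`
    (hznil : ∀ m : ℕ, algebraMap C W z ^ m ≠ 0)
    (k : ℕ)
    -- the ascending chain of annihilators stabilizes at `k`
    (hstab : ∀ m, k ≤ m → ∀ w : W,
      algebraMap C W z ^ m * w = 0 ↔ algebraMap C W z ^ k * w = 0) :
    (∀ w : W, algebraMap C W z ^ k * w = 0 →
      (∃ y : W, w = algebraMap C W z ^ k * y) → w = 0) ∧
    (∀ w : W, algebraMap C W z ^ k * w = 0 → w = 0) ∧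
    (∀ w : W, algebraMap C W z * w = 0 → w = 0) :=
  H_irreducible_non_nilpotent_not_zero_divisor_general F H C W MW hCequiv hirr z hznil k hstab
end
end

section
/- Let B be a finite dimensional H-module algebra of Kemer index p and let (Ã_i)_{i≥1} be finite dimensional H-module algebras of Kemer index less than p. Let I be the H-T-ideal generated by all H-Kemer polynomials of B. If the ascending chain id^H(B × Ã₁) ⊆ id^H(B × Ã₂) ⊆ ⋯ holds and the chain (id^H(B × Ã_i) + I)_i stabilizes, then, since I ⊆ id^H(Ã_i) for all i implies id^H(B × Ã_i) ∩ I = id^H(B) ∩ I is independent of i, the chain (id^H(B × Ã_i))_i stabilizes. -/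
noncomputable section
open TensorProduct

/-! ## The free `H`-module algebra -/

variable (F : Type) [Field F] (H : Type) [Ring H] [Algebra F H]

variable {V : Type}

/-! ## `H`-module algebras -/

variable [Coalgebra F H]

variable {A : Type} [Ring A] [Algebra F A]

theorem exists_forall_ge_eq_of_monotone_of_inf_const_of_sup_stable
    {α : Type*} [Lattice α] [IsModularLattice α] {J : ℕ → α} {c : α} (hJ : Monotone J)
    (hinf : ∀ i j, J i ⊓ c = J j ⊓ c) (hsup : ∃ N, ∀ i, N ≤ i → J i ⊔ c = J N ⊔ c) :
    ∃ N, ∀ i, N ≤ i → J i = J N := by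
  obtain ⟨N, hN⟩ := hsup
  exact ⟨N, fun i hi =>
    (eq_of_le_of_inf_le_of_sup_le (hJ hi) (hinf i N).le (hN i hi).le).symm⟩

theorem chain_stabilizes_from_kemer_ideal_general
    (F : Type) [Field F] (H : Type) [Ring H] [HopfAlgebra F H]
    (B : FDHMA F H) (tA : ℕ → FDHMA F H)
    -- `I` = the `H`-T-ideal generated by all `H`-Kemer polynomials of `B`
    (I : Submodule F (FreeHMA F H ℕ))
    -- the chain `J_i = id^H(B × Ã_i) = id^H(B) ∩ id^H(Ã_i)` is ascending
    (hchain : ∀ i : ℕ,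
      B.M.idSub F H ℕ ⊓ (tA i).M.idSub F H ℕ ≤ B.M.idSub F H ℕ ⊓ (tA (i + 1)).M.idSub F H ℕ)
    -- `(J_i + I)` stabilizes
    (hstab : ∃ N : ℕ, ∀ i, N ≤ i →
      (B.M.idSub F H ℕ ⊓ (tA i).M.idSub F H ℕ) ⊔ I
        = (B.M.idSub F H ℕ ⊓ (tA N).M.idSub F H ℕ) ⊔ I)
    -- `I ⊆ id^H(Ã_i)` for all `i` (so `J_i ∩ I = id^H(B) ∩ I` is independent of `i`)
    (hIsub : ∀ i : ℕ, I ≤ (tA i).M.idSub F H ℕ) :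
    ∃ N : ℕ, ∀ i, N ≤ i →
      B.M.idSub F H ℕ ⊓ (tA i).M.idSub F H ℕ
        = B.M.idSub F H ℕ ⊓ (tA N).M.idSub F H ℕ := by
  have hinf_eq : ∀ i, B.M.idSub F H ℕ ⊓ (tA i).M.idSub F H ℕ ⊓ I = B.M.idSub F H ℕ ⊓ I :=
    fun i => by rw [inf_assoc, inf_eq_right.2 (hIsub i)]
  exact exists_forall_ge_eq_of_monotone_of_inf_const_of_sup_stable
    (monotone_nat_of_le_succ hchain) (fun i j => by rw [hinf_eq, hinf_eq]) hstab

/-- Let `B` be a finite dimensional `H`-module algebra of Kemer index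
`p` and `(Ã_i)` finite dimensional `H`-module algebras of Kemer index less than `p`.
Let `I` be the `H`-T-ideal generated by all `H`-Kemer polynomials of `B`.  If the chain
`id^H(B × Ã₁) ⊆ id^H(B × Ã₂) ⊆ ⋯` is ascending, the chain `(id^H(B × Ã_i) + I)` 
stabilizes, and `I ⊆ id^H(Ã_i)` for all `i`, then the chain `(id^H(B × Ã_i))` 
stabilizes. -/
theorem chain_stabilizes_from_kemer_ideal
    (F : Type) [Field F] [CharZero F] (H : Type) [Ring H] [HopfAlgebra F H]
    [FiniteDimensional F H] [IsSemisimpleRing H]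
    (𝔉 : HMA F H (FreeHMA F H ℕ)) (hfree : IsFreeAction F H 𝔉)
    (B : FDHMA F H) (tA : ℕ → FDHMA F H) (p : ℕ × ℕ)
    (hB : kemerIndex F H (B.ids F H) = p)
    (htA : ∀ i, toLex (kemerIndex F H ((tA i).ids F H)) < toLex p)
    -- `I` = the `H`-T-ideal generated by all `H`-Kemer polynomials of `B`
    (I : Submodule F (FreeHMA F H ℕ))
    (hI : I = Submodule.span F (hTIdealSpan F H 𝔉
      {f | ∃ μ : ℕ, IsKemerPoly F H (B.ids F H) μ f}))
    -- the chain `J_i = id^H(B × Ã_i) = id^H(B) ∩ id^H(Ã_i)` is ascending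
    (hchain : ∀ i : ℕ,
      B.M.idSub F H ℕ ⊓ (tA i).M.idSub F H ℕ ≤ B.M.idSub F H ℕ ⊓ (tA (i + 1)).M.idSub F H ℕ)
    -- `(J_i + I)` stabilizes
    (hstab : ∃ N : ℕ, ∀ i, N ≤ i →
      (B.M.idSub F H ℕ ⊓ (tA i).M.idSub F H ℕ) ⊔ I
        = (B.M.idSub F H ℕ ⊓ (tA N).M.idSub F H ℕ) ⊔ I)
    -- `I ⊆ id^H(Ã_i)` for all `i` (so `J_i ∩ I = id^H(B) ∩ I` is independent of `i`)
    (hIsub : ∀ i : ℕ, I ≤ (tA i).M.idSub F H ℕ) :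
    ∃ N : ℕ, ∀ i, N ≤ i →
      B.M.idSub F H ℕ ⊓ (tA i).M.idSub F H ℕ
        = B.M.idSub F H ℕ ⊓ (tA N).M.idSub F H ℕ :=
  chain_stabilizes_from_kemer_ideal_general F H B tA I hchain hstab hIsub
end
end
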